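/- Let G be a regular caterpillar with an even number s = 2k ≥ 2 of spine vertices, each spine vertex having exactly Δ ≥ 1 legs, so that G has n = 2k(Δ+1) vertices. Then there exists a labeling of G with differential value at least n/2; consequently the differential chromatic number of G equals n/2. -/

import Mathlib

/-- A labeling of the vertices of a finite graph on `n` vertices: a one-to-one
assignment of the numbers `1, …, n` to the vertices. -/
def IsLabeling {V : Type*} [Fintype V] (c : V → ℕ) : Prop :=
  Function.Injective c ∧ ∀ v, c v ∈ Finset.Icc 1 (Fintype.card V)

/-- The differential value of the labeling `c` is at least `d`: every edge has
label difference at least `d`. -/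
def DiffValAtLeast {V : Type*} (G : SimpleGraph V) (c : V → ℕ) (d : ℕ) : Prop :=
  ∀ u v, G.Adj u v → d ≤ Nat.dist (c u) (c v)

/-- The differential chromatic number: the maximum, over all labelings, of the
minimum label difference over the edges. -/
noncomputable def diffChromNum {V : Type*} [Fintype V] (G : SimpleGraph V) : ℕ :=
  sSup {d : ℕ | ∃ c : V → ℕ, IsLabeling c ∧ DiffValAtLeast G c d}

/-- The regular caterpillar with spine vertices `(i, 0)` for `i : Fin s` forming a
path, each spine vertex `(i, 0)` adjacent to its `Δ` legs `(i, j)`, `j ≠ 0`. -/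
def regularCaterpillar (s Δ : ℕ) : SimpleGraph (Fin s × Fin (Δ + 1)) :=
  SimpleGraph.fromRel (fun a b =>
    (a.2 = 0 ∧ b.2 = 0 ∧ (a.1 : ℕ) + 1 = (b.1 : ℕ)) ∨
    (a.1 = b.1 ∧ a.2 = 0 ∧ b.2 ≠ 0))

/-! Both colour classes of the caterpillar have `m = k(Δ+1)` vertices: the even spine vertices
with the legs of the odd ones, and the odd spine vertices with the legs of the even ones. The
first class gets the labels `1, …, m`, the second `m + 1, …, 2m`, each in the order "spine
vertices before legs" resp. "legs before spine vertices", with spine vertices and leg blocks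
ordered along the spine. Every edge then joins a label `a` of the first class to a label `m + b`
of the second with `a ≤ b`, so its label difference is at least `m`. No graph without isolated
vertices does better, because the vertex labelled `⌊n/2⌋ + 1` is within `⌊n/2⌋` of every label. -/

theorem Nat.eq_and_eq_of_mul_add_eq {n a b j j' : ℕ} (hj : 1 ≤ j) (hjn : j ≤ n) (hj' : 1 ≤ j')
    (hj'n : j' ≤ n) (h : a * n + j = b * n + j') : a = b ∧ j = j' := by
  obtain rfl : a = b := by
    by_contra hab
    rcases Nat.lt_or_gt_of_ne hab with hab | hab <;> nlinarith
  omega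

theorem Nat.mul_add_le_mul_of_lt {t k : ℕ} (n : ℕ) (ht : t < k) : t * n + n ≤ k * n := by
  simpa [add_mul] using Nat.mul_le_mul_right n (Nat.succ_le_of_lt ht)

section Labeling

variable {V : Type*} [Fintype V]

theorem IsLabeling.image_univ {c : V → ℕ} (hc : IsLabeling c) :
    Finset.univ.image c = Finset.Icc 1 (Fintype.card V) :=
  Finset.eq_of_subset_of_card_le (fun _ ha ↦ by
      obtain ⟨v, -, rfl⟩ := Finset.mem_image.1 ha
      exact hc.2 v)
    (by simp [Finset.card_image_of_injective _ hc.1])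

theorem IsLabeling.exists_eq {c : V → ℕ} (hc : IsLabeling c) {a : ℕ} (ha₁ : 1 ≤ a)
    (ha : a ≤ Fintype.card V) : ∃ v, c v = a := by
  have : a ∈ Finset.univ.image c := hc.image_univ ▸ Finset.mem_Icc.2 ⟨ha₁, ha⟩
  simpa using this

theorem DiffValAtLeast.le_card_div_two [Nonempty V] {G : SimpleGraph V} {c : V → ℕ} {d : ℕ}
    (hc : IsLabeling c) (hd : DiffValAtLeast G c d) (hG : ∀ v, ∃ u, G.Adj v u) :
    d ≤ Fintype.card V / 2 := by
  have hn : 0 < Fintype.card V := Fintype.card_pos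
  obtain ⟨v, hv⟩ := hc.exists_eq (a := Fintype.card V / 2 + 1) (by omega) (by omega)
  obtain ⟨u, huv⟩ := hG v
  have hu := Finset.mem_Icc.1 (hc.2 u)
  have := hd v u huv
  rw [hv, Nat.dist] at this
  omega

theorem diffChromNum_eq_card_div_two [Nonempty V] {G : SimpleGraph V}
    (hG : ∀ v, ∃ u, G.Adj v u)
    (hex : ∃ c : V → ℕ, IsLabeling c ∧ DiffValAtLeast G c (Fintype.card V / 2)) :
    diffChromNum G = Fintype.card V / 2 :=
  IsGreatest.csSup_eq ⟨hex, fun _ ⟨_, hc, hd⟩ ↦ hd.le_card_div_two hc hG⟩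

end Labeling

section Caterpillar

theorem regularCaterpillar_exists_adj {s Δ : ℕ} (hΔ : 1 ≤ Δ) (v : Fin s × Fin (Δ + 1)) :
    ∃ u, (regularCaterpillar s Δ).Adj v u := by
  simp only [regularCaterpillar, SimpleGraph.fromRel_adj]
  by_cases hv : v.2 = 0
  · refine ⟨(v.1, ⟨1, by omega⟩), ?_, .inl (.inr ⟨rfl, hv, ?_⟩)⟩
    · simp [Prod.ext_iff, hv, Fin.ext_iff]
    · simp [Fin.ext_iff]
  · exact ⟨(v.1, 0), by simp [Prod.ext_iff, hv], .inr (.inr ⟨rfl, rfl, hv⟩)⟩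

def caterpillarLabel (k Δ i j : ℕ) : ℕ :=
  if i % 2 = 0 then
    if j = 0 then i / 2 + 1 else k * (Δ + 1) + i / 2 * Δ + j
  else
    if j = 0 then k * (Δ + 1) + k * Δ + i / 2 + 1 else k + i / 2 * Δ + j

variable {k Δ : ℕ}

theorem caterpillarLabel_mem_Icc {i j : ℕ} (hi : i < 2 * k) (hj : j ≤ Δ) :
    caterpillarLabel k Δ i j ∈ Finset.Icc 1 (2 * k * (Δ + 1)) := by
  have := Nat.mul_add_le_mul_of_lt Δ (show i / 2 < k by omega)
  have hm : 2 * k * (Δ + 1) = k * (Δ + 1) + k * Δ + k := by ring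
  rw [Finset.mem_Icc, hm]
  unfold caterpillarLabel
  split_ifs <;> omega

theorem caterpillarLabel_inj {i j i' j' : ℕ} (hi : i < 2 * k) (hi' : i' < 2 * k) (hj : j ≤ Δ)
    (hj' : j' ≤ Δ) (h : caterpillarLabel k Δ i j = caterpillarLabel k Δ i' j') :
    i = i' ∧ j = j' := by
  have hlt := Nat.mul_add_le_mul_of_lt Δ (show i / 2 < k by omega)
  have hlt' := Nat.mul_add_le_mul_of_lt Δ (show i' / 2 < k by omega)
  have legs : j = 0 ∨ j' = 0 ∨ i / 2 * Δ + j ≠ i' / 2 * Δ + j' ∨ (i / 2 = i' / 2 ∧ j = j') := by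
    by_cases hj₀ : j = 0
    · exact .inl hj₀
    by_cases hj₀' : j' = 0
    · exact .inr (.inl hj₀')
    exact .inr (.inr (or_iff_not_imp_left.2 fun heq ↦
      Nat.eq_and_eq_of_mul_add_eq (by omega) hj (by omega) hj' (not_not.1 heq)))
  have hm : k * (Δ + 1) = k * Δ + k := by ring
  unfold caterpillarLabel at h
  split_ifs at h <;> omega

theorem caterpillarLabel_spine_succ (hΔ : 1 ≤ Δ) {i : ℕ} (hi : i + 1 < 2 * k) :
    k * (Δ + 1) ≤ Nat.dist (caterpillarLabel k Δ i 0) (caterpillarLabel k Δ (i + 1) 0) := by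
  have hkΔ : k ≤ k * Δ := Nat.le_mul_of_pos_right k hΔ
  have hm : k * (Δ + 1) = k * Δ + k := by ring
  unfold caterpillarLabel
  rw [Nat.dist]
  split_ifs <;> omega

theorem caterpillarLabel_spine_leg (hΔ : 1 ≤ Δ) {i j : ℕ} (hi : i < 2 * k) (hj₀ : j ≠ 0)
    (hj : j ≤ Δ) :
    k * (Δ + 1) ≤ Nat.dist (caterpillarLabel k Δ i 0) (caterpillarLabel k Δ i j) := by
  -- for odd `i` the bound reduces to `(k - i / 2 - 1) * (Δ - 1) ≥ 0`
  obtain ⟨u, hu⟩ : ∃ u, k = i / 2 + 1 + u := ⟨k - i / 2 - 1, by omega⟩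
  have hkΔ : k * Δ = i / 2 * Δ + Δ + u * Δ := by rw [hu]; ring
  have hi₂ : i / 2 ≤ i / 2 * Δ := Nat.le_mul_of_pos_right _ hΔ
  have hu : u ≤ u * Δ := Nat.le_mul_of_pos_right _ hΔ
  have hm : k * (Δ + 1) = k * Δ + k := by ring
  unfold caterpillarLabel
  rw [Nat.dist]
  split_ifs <;> omega

theorem isLabeling_caterpillarLabel :
    IsLabeling fun v : Fin (2 * k) × Fin (Δ + 1) ↦ caterpillarLabel k Δ v.1 v.2 := by
  refine ⟨fun v w h ↦ ?_, fun v ↦ ?_⟩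
  · obtain ⟨h₁, h₂⟩ := caterpillarLabel_inj v.1.isLt w.1.isLt (Nat.le_of_lt_succ v.2.isLt)
      (Nat.le_of_lt_succ w.2.isLt) h
    exact Prod.ext (Fin.ext h₁) (Fin.ext h₂)
  · simpa [mul_assoc] using caterpillarLabel_mem_Icc v.1.isLt (Nat.le_of_lt_succ v.2.isLt)

theorem diffValAtLeast_caterpillarLabel (hΔ : 1 ≤ Δ) :
    DiffValAtLeast (regularCaterpillar (2 * k) Δ)
      (fun v ↦ caterpillarLabel k Δ v.1 v.2) (k * (Δ + 1)) := by
  have edge : ∀ v w : Fin (2 * k) × Fin (Δ + 1),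
      (v.2 = 0 ∧ w.2 = 0 ∧ (v.1 : ℕ) + 1 = w.1) ∨ (v.1 = w.1 ∧ v.2 = 0 ∧ w.2 ≠ 0) →
      k * (Δ + 1) ≤ Nat.dist (caterpillarLabel k Δ v.1 v.2) (caterpillarLabel k Δ w.1 w.2) := by
    rintro ⟨i, j⟩ ⟨i', j'⟩ (⟨rfl, rfl, hi⟩ | ⟨rfl, rfl, hj⟩) <;> dsimp only at *
    · rw [Fin.val_zero, ← hi]
      exact caterpillarLabel_spine_succ hΔ (hi ▸ i'.isLt)
    · exact caterpillarLabel_spine_leg hΔ i.isLt (Fin.val_ne_of_ne hj) (Nat.le_of_lt_succ j'.isLt)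
  rintro v w ⟨-, hvw | hwv⟩
  · exact edge v w hvw
  · exact Nat.dist_comm _ _ ▸ edge w v hwv

end Caterpillar

/-- A regular caterpillar with an even number `s = 2k ≥ 2` of spine vertices and
`Δ ≥ 1` legs per spine vertex (`n = 2k(Δ+1)`) admits a labeling of differential
value at least `n/2 = k(Δ+1)`, and its differential chromatic number equals `n/2`. -/
theorem stmt_6 (k Δ : ℕ) (hk : 1 ≤ k) (hΔ : 1 ≤ Δ) :
    (∃ c : Fin (2 * k) × Fin (Δ + 1) → ℕ, IsLabeling c ∧
      DiffValAtLeast (regularCaterpillar (2 * k) Δ) c (k * (Δ + 1))) ∧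
    diffChromNum (regularCaterpillar (2 * k) Δ) = k * (Δ + 1) := by
  have hlabel : ∃ c : Fin (2 * k) × Fin (Δ + 1) → ℕ, IsLabeling c ∧
      DiffValAtLeast (regularCaterpillar (2 * k) Δ) c (k * (Δ + 1)) :=
    ⟨_, isLabeling_caterpillarLabel, diffValAtLeast_caterpillarLabel hΔ⟩
  have hcard : Fintype.card (Fin (2 * k) × Fin (Δ + 1)) / 2 = k * (Δ + 1) := by
    simp [mul_assoc]
  have : Nonempty (Fin (2 * k) × Fin (Δ + 1)) := ⟨(⟨0, by omega⟩, 0)⟩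
  refine ⟨hlabel, hcard ▸ diffChromNum_eq_card_div_two (regularCaterpillar_exists_adj hΔ) ?_⟩
  exact hcard ▸ hlabel
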